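/- The function η ↦ 2ω(η) + 2ω(r(η)) - ω(2η + 2r(η)), where ω(ξ) = ξ/(1+ξ²) and r(η) = sign(η)·√((η²+3)/(η²-1)), has no zeros on {|η| > 1}. -/
import Mathlib


noncomputable def ω : ℝ → ℝ := fun ξ => ξ / (1 + ξ^2)

noncomputable def r (ξ : ℝ) : ℝ := Real.sign ξ * Real.sqrt ((ξ^2 + 3) / (ξ^2 - 1))

lemma omega_neg (x : ℝ) : ω (-x) = -ω x := by
  simp [ω, neg_div]

lemma key (η : ℝ) (hη : 1 < η) :
    0 < 2 * ω η + 2 * ω (Real.sqrt ((η^2 + 3) / (η^2 - 1)))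
      - ω (2 * η + 2 * Real.sqrt ((η^2 + 3) / (η^2 - 1))) := by
  set a := Real.sqrt ((η^2 + 3) / (η^2 - 1)) with ha_def
  have hden : (0:ℝ) < η^2 - 1 := by nlinarith
  have ha1 : 1 < a := by
    rw [ha_def, show (1:ℝ) < Real.sqrt ((η^2+3)/(η^2-1)) ↔ (1:ℝ)^2 < (η^2+3)/(η^2-1) from Real.lt_sqrt (by positivity), one_pow, lt_div_iff₀ hden]
    nlinarith
  have hωa : 0 < ω a := div_pos (by linarith) (by positivity)
  have h2 : 2 * ω η = 2 * η / (1 + η^2) := by rw [ω]; ring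
  have hmain : ω (2 * η + 2 * a) < 2 * ω η := by
    rw [h2, ω]
    rw [div_lt_div_iff₀ (by positivity) (by positivity)]
    nlinarith [sq_nonneg (η - a), sq_nonneg (η + a), mul_pos (lt_trans one_pos hη) (lt_trans one_pos ha1)]
  linarith

theorem bbm_phase_no_zeros_double_sum :
    ∀ η : ℝ, 1 < |η| → 2 * ω η + 2 * ω (r η) - ω (2 * η + 2 * r η) ≠ 0 := by
  intro η hη
  rcases lt_abs.mp hη with h | h
  · have hr : r η = Real.sqrt ((η^2 + 3) / (η^2 - 1)) := by
      rw [r, Real.sign_of_pos (by linarith), one_mul]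
    rw [hr]
    exact ne_of_gt (key η h)
  · have hη' : η < -1 := by linarith
    have hsq : ((-η)^2 + 3) / ((-η)^2 - 1) = (η^2 + 3) / (η^2 - 1) := by ring_nf
    have hr : r η = -Real.sqrt (((-η)^2 + 3) / ((-η)^2 - 1)) := by
      rw [r, Real.sign_of_neg (by linarith), hsq]; ring
    set a := Real.sqrt (((-η)^2 + 3) / ((-η)^2 - 1)) with ha_def
    have hk := key (-η) h
    rw [hr]
    have heq : 2 * ω η + 2 * ω (-a) - ω (2 * η + 2 * (-a))
        = -(2 * ω (-η) + 2 * ω a - ω (2 * (-η) + 2 * a)) := by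
      rw [show (2 * η + 2 * (-a)) = -(2 * (-η) + 2 * a) by ring,
        omega_neg, omega_neg, omega_neg]
      ring
    rw [heq]
    intro hc
    linarith [neg_eq_zero.mp hc]
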